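/- arXiv:2007.07847 — 2 statements merged into one kernel-verified Lean document; each statement's English description precedes it below -/
import Mathlib

section
/- Let K ≥ 2 and k̃ ∈ Fin K. Let v : Fin K → ℕ → ℕ → ℝ and β : ℕ → ℕ → ℝ. Assume: (i) there exist real numbers β̲ > 0 and β̄ < 1 such that, eventually along the product filter, β̲ ≤ β(n,m) ≤ β̄; (ii) for every k ≠ k̃, v_k(n,m) → 1 along the product filter; (iii) v_{k̃}(n,m) → 0 along the product filter. Then there exist N, M such that for all n ≥ N and m ≥ M and all k ∈ Fin K: v_k(n,m) > β(n,m) if and only if k ≠ k̃; that is, the thresholding decision d̂(v(n,m), β(n,m)) equals the oracle decision d̃ defined by d̃_k = 1 if k ≠ k̃ and d̃_{k̃} = 0. -/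
open Filter Topology

/-
Eventually `β` lies in `[βlo, βhi] ⊆ (0, 1)`, so eventually `v k₀ < βlo ≤ β`, and, because
there are only finitely many `k ≠ k₀`, eventually `β ≤ βhi < v k` for all of them at once.
-/

theorem Filter.eventually_lt_iff_ne_of_tendsto {ι α R : Type*} [Finite ι]
    [TopologicalSpace R] [LinearOrder R] [OrderClosedTopology R]
    {l : Filter α} {v : ι → α → R} {β : α → R} {k₀ : ι} {x₀ x₁ βlo βhi : R}
    (hlo : x₀ < βlo) (hhi : βhi < x₁) (hβ : ∀ᶠ a in l, βlo ≤ β a ∧ β a ≤ βhi)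
    (hv₀ : Tendsto (v k₀) l (𝓝 x₀)) (hv₁ : ∀ k ≠ k₀, Tendsto (v k) l (𝓝 x₁)) :
    ∀ᶠ a in l, ∀ k, β a < v k a ↔ k ≠ k₀ := by
  have hbelow : ∀ᶠ a in l, v k₀ a < βlo := hv₀.eventually_lt_const hlo
  have habove : ∀ᶠ a in l, ∀ k ≠ k₀, βhi < v k a := by
    refine eventually_all.2 fun k => ?_
    by_cases hk : k = k₀
    · exact .of_forall fun _ h => absurd hk h
    · exact (hv₁ k hk).eventually_const_lt hhi |>.mono fun _ h _ => h
  filter_upwards [hβ, hbelow, habove] with a ⟨hβlo, hβhi⟩ hk₀ hk k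
  refine ⟨fun hlt hk' => ?_, fun hne => hβhi.trans_lt (hk k hne)⟩
  subst hk'
  exact (hk₀.trans_le hβlo).not_gt hlt

theorem multiple_testing_asymptotically_optimal_general
    (K : ℕ) (k₀ : Fin K)
    (v : Fin K → ℕ → ℕ → ℝ) (β : ℕ → ℕ → ℝ)
    (hβ : ∃ βlo βhi : ℝ, 0 < βlo ∧ βhi < 1 ∧
      ∀ᶠ p : ℕ × ℕ in atTop ×ˢ atTop, βlo ≤ β p.1 p.2 ∧ β p.1 p.2 ≤ βhi)
    (hv1 : ∀ k : Fin K, k ≠ k₀ →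
      Tendsto (fun p : ℕ × ℕ => v k p.1 p.2) (atTop ×ˢ atTop) (nhds 1))
    (hv0 : Tendsto (fun p : ℕ × ℕ => v k₀ p.1 p.2) (atTop ×ˢ atTop) (nhds 0)) :
    ∃ N M : ℕ, ∀ n ≥ N, ∀ m ≥ M, ∀ k : Fin K,
      v k n m > β n m ↔ k ≠ k₀ := by
  obtain ⟨βlo, βhi, hlo, hhi, hβev⟩ := hβ
  have hdecide := eventually_lt_iff_ne_of_tendsto (v := fun k p => v k p.1 p.2) hlo hhi hβev
    hv0 hv1
  rw [prod_atTop_atTop_eq, eventually_atTop_prod_self'] at hdecide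
  obtain ⟨N, hN⟩ := hdecide
  exact ⟨N, N, fun n hn m hm => hN n hn m hm⟩

/-- Asymptotic optimality of the multiple testing procedure: if the posterior
probabilities of the alternative hypotheses converge to 1 for all `k ≠ k₀` and to 0
for `k = k₀` (the best model), and the penalty sequence `β(n,m)` is eventually bounded
away from 0 and 1, then for all sufficiently large `n` and `m` the thresholding decision
equals the oracle decision rejecting exactly the hypotheses `k ≠ k₀`. -/
theorem multiple_testing_asymptotically_optimal
    (K : ℕ) (hK : 2 ≤ K) (k₀ : Fin K)
    (v : Fin K → ℕ → ℕ → ℝ) (β : ℕ → ℕ → ℝ)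
    (hβ : ∃ βlo βhi : ℝ, 0 < βlo ∧ βhi < 1 ∧
      ∀ᶠ p : ℕ × ℕ in atTop ×ˢ atTop, βlo ≤ β p.1 p.2 ∧ β p.1 p.2 ≤ βhi)
    (hv1 : ∀ k : Fin K, k ≠ k₀ →
      Tendsto (fun p : ℕ × ℕ => v k p.1 p.2) (atTop ×ˢ atTop) (nhds 1))
    (hv0 : Tendsto (fun p : ℕ × ℕ => v k₀ p.1 p.2) (atTop ×ˢ atTop) (nhds 0)) :
    ∃ N M : ℕ, ∀ n ≥ N, ∀ m ≥ M, ∀ k : Fin K,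
      v k n m > β n m ↔ k ≠ k₀ :=
  multiple_testing_asymptotically_optimal_general K k₀ v β hβ hv1 hv0
end

section
/- Let K ≥ 2 and k̃ ∈ Fin K. Let v : Fin K → ℕ → ℕ → [0,1] and β : ℕ → ℕ → ℝ. Assume: (i) there exist real numbers β̲ > 0 and β̄ < 1 such that, eventually along the product filter, β̲ ≤ β(n,m) ≤ β̄; (ii) for every k ≠ k̃, v_k(n,m) → 1 along the product filter; (iii) v_{k̃}(n,m) → 0 along the product filter. Then the conditional false discovery rate of the thresholding decision, cFDR(n,m) = cFDR(d̂(v(n,m), β(n,m)), v(n,m)), converges to 0 along the product filter. -/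
open Filter Finset Topology

/-! The threshold stays above a positive constant while the null posteriors tend to `0`, so
eventually no null hypothesis is rejected. From then on every rejected `k` is a non-null and
contributes at most `|1 - v k|` to the numerator of the cFDR, whose denominator is at least `1`;
these contributions tend to `0`. -/

variable {ι α : Type*}

noncomputable def thresholdDecision (v : ι → ℝ) (β : ℝ) : ι → ℝ :=
  fun k => if v k > β then 1 else 0

theorem abs_thresholdDecision_le_one (v : ι → ℝ) (β : ℝ) (k : ι) :
    |thresholdDecision v β k| ≤ 1 := by
  unfold thresholdDecision
  split_ifs <;> norm_num

variable [Fintype ι]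

noncomputable def cFDR (d v : ι → ℝ) : ℝ :=
  (∑ k, d k * (1 - v k)) / max (∑ k, d k) 1

theorem abs_cFDR_thresholdDecision_le {v : ι → ℝ} {β : ℝ} (s : Finset ι)
    (hs : ∀ k ∉ s, v k ≤ β) :
    |cFDR (thresholdDecision v β) v| ≤ ∑ k ∈ s, |1 - v k| := by
  set d := thresholdDecision v β
  have hnum : ∑ k, d k * (1 - v k) = ∑ k ∈ s, d k * (1 - v k) := by
    refine (sum_subset (subset_univ s) fun k _ hk => ?_).symm
    simp [d, thresholdDecision, not_lt.mpr (hs k hk)]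
  calc |cFDR d v|
      ≤ |∑ k, d k * (1 - v k)| := by
        rw [cFDR, abs_div]
        exact div_le_self (abs_nonneg _) (le_abs.mpr (Or.inl (le_max_right _ _)))
    _ ≤ ∑ k ∈ s, |d k| * |1 - v k| := by
        rw [hnum]
        simpa only [abs_mul] using abs_sum_le_sum_abs (fun k => d k * (1 - v k)) s
    _ ≤ ∑ k ∈ s, |1 - v k| := by
        gcongr with k
        exact mul_le_of_le_one_left (abs_nonneg _) (abs_thresholdDecision_le_one v β k)

theorem tendsto_cFDR_thresholdDecision_zero {l : Filter α} {v : ι → α → ℝ} {β : α → ℝ}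
    (s : Finset ι) {βlo : ℝ} (hβlo : 0 < βlo) (hβ : ∀ᶠ a in l, βlo ≤ β a)
    (hv1 : ∀ k ∈ s, Tendsto (v k) l (𝓝 1)) (hv0 : ∀ k ∉ s, Tendsto (v k) l (𝓝 0)) :
    Tendsto (fun a => cFDR (thresholdDecision (v · a) (β a)) (v · a)) l (𝓝 0) := by
  have hbelow : ∀ᶠ a in l, ∀ k ∉ s, v k a < βlo := by
    refine eventually_all.mpr fun k => ?_
    by_cases hk : k ∈ s
    · exact Eventually.of_forall fun _ hk' => absurd hk hk'
    · exact ((hv0 k hk).eventually (eventually_lt_nhds hβlo)).mono fun _ h _ => h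
  have hnull : ∀ᶠ a in l, ∀ k ∉ s, v k a ≤ β a := by
    filter_upwards [hbelow, hβ] with a ha hβa k hk
    exact (ha k hk).le.trans hβa
  have hbound : Tendsto (fun a => ∑ k ∈ s, |1 - v k a|) l (𝓝 0) := by
    simpa using tendsto_finsetSum s fun k hk => ((hv1 k hk).const_sub 1).abs
  exact squeeze_zero_norm' (hnull.mono fun a ha => abs_cFDR_thresholdDecision_le s ha) hbound

theorem cFDR_tendsto_zero_general
    (K : ℕ) (k₀ : Fin K)
    (v : Fin K → ℕ → ℕ → ℝ)
    (β : ℕ → ℕ → ℝ)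
    (hβ : ∃ βlo βhi : ℝ, 0 < βlo ∧ βhi < 1 ∧
      ∀ᶠ p : ℕ × ℕ in atTop ×ˢ atTop, βlo ≤ β p.1 p.2 ∧ β p.1 p.2 ≤ βhi)
    (hv1 : ∀ k : Fin K, k ≠ k₀ →
      Tendsto (fun p : ℕ × ℕ => v k p.1 p.2) (atTop ×ˢ atTop) (nhds 1))
    (hv0 : Tendsto (fun p : ℕ × ℕ => v k₀ p.1 p.2) (atTop ×ˢ atTop) (nhds 0)) :
    Tendsto
      (fun p : ℕ × ℕ =>
        (∑ k : Fin K, (if v k p.1 p.2 > β p.1 p.2 then (1 : ℝ) else 0) * (1 - v k p.1 p.2)) /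
          max (∑ k : Fin K, (if v k p.1 p.2 > β p.1 p.2 then (1 : ℝ) else 0)) 1)
      (atTop ×ˢ atTop) (nhds 0) := by
  obtain ⟨βlo, _, hβlo, -, hβev⟩ := hβ
  have hnull : ∀ k ∉ univ.erase k₀, k = k₀ := fun k hk => by simpa using hk
  exact tendsto_cFDR_thresholdDecision_zero (v := fun k (p : ℕ × ℕ) => v k p.1 p.2)
    (univ.erase k₀) hβlo (hβev.mono fun _ h => h.1) (fun k hk => hv1 k (ne_of_mem_erase hk))
    (fun k hk => hnull k hk ▸ hv0)

/-- Convergence of the conditional false discovery rate of the thresholding decision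
to zero: `cFDR(d, v) = (Σ_k d_k (1 − v_k)) / max(Σ_k d_k, 1)` with
`d_k = 1` iff `v_k > β`. -/
theorem cFDR_tendsto_zero
    (K : ℕ) (hK : 2 ≤ K) (k₀ : Fin K)
    (v : Fin K → ℕ → ℕ → ℝ)
    (hv01 : ∀ k n m, 0 ≤ v k n m ∧ v k n m ≤ 1)
    (β : ℕ → ℕ → ℝ)
    (hβ : ∃ βlo βhi : ℝ, 0 < βlo ∧ βhi < 1 ∧
      ∀ᶠ p : ℕ × ℕ in atTop ×ˢ atTop, βlo ≤ β p.1 p.2 ∧ β p.1 p.2 ≤ βhi)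
    (hv1 : ∀ k : Fin K, k ≠ k₀ →
      Tendsto (fun p : ℕ × ℕ => v k p.1 p.2) (atTop ×ˢ atTop) (nhds 1))
    (hv0 : Tendsto (fun p : ℕ × ℕ => v k₀ p.1 p.2) (atTop ×ˢ atTop) (nhds 0)) :
    Tendsto
      (fun p : ℕ × ℕ =>
        (∑ k : Fin K, (if v k p.1 p.2 > β p.1 p.2 then (1 : ℝ) else 0) * (1 - v k p.1 p.2)) /
          max (∑ k : Fin K, (if v k p.1 p.2 > β p.1 p.2 then (1 : ℝ) else 0)) 1)
      (atTop ×ˢ atTop) (nhds 0) :=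
  cFDR_tendsto_zero_general K k₀ v β hβ hv1 hv0
end
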